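/- arXiv:1811.10271 — 2 statements merged into one kernel-verified Lean document; each statement's English description precedes it below -/
import Mathlib

section
/- If a vertex v of a pure d-dimensional balanced simplicial complex Δ is removable (i.e., there exists a cross-flip χ_Φ such that v is not a vertex of χ_Φ(Δ)), then the link of v in Δ has exactly 2d vertices. -/
open Finset

variable {V : Type} [DecidableEq V] {W : Type} [DecidableEq W]

/-- An abstract simplicial complex, given by its finite set of (nonempty) faces. -/
def IsCplx (K : Finset (Finset V)) : Prop :=
  ∅ ∉ K ∧ ∀ F ∈ K, ∀ G, G ⊆ F → G ≠ ∅ → G ∈ K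

/-- The vertex set of a complex. -/
def verts (K : Finset (Finset V)) : Finset V := K.sup id

/-- The number of `i`-dimensional faces. -/
def fnum (K : Finset (Finset V)) (i : ℕ) : ℕ := (K.filter fun F => F.card = i + 1).card

/-- The link of a face. -/
def link (K : Finset (Finset V)) (F : Finset V) : Finset (Finset V) :=
  K.filter fun G => Disjoint G F ∧ G ∪ F ∈ K

/-- A complex is pure `d`-dimensional. -/
def PureC (d : ℕ) (K : Finset (Finset V)) : Prop :=
  (∀ F ∈ K, F.card ≤ d + 1) ∧ ∀ F ∈ K, ∃ G ∈ K, F ⊆ G ∧ G.card = d + 1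

/-- A proper `(d+1)`-coloring of the vertices. -/
def ProperColoring (d : ℕ) (K : Finset (Finset V)) (κ : V → Fin (d + 1)) : Prop :=
  ∀ F ∈ K, Set.InjOn κ ↑F

/-- A `d`-dimensional complex is balanced if its graph is `(d+1)`-colorable. -/
def BalancedC (d : ℕ) (K : Finset (Finset V)) : Prop :=
  ∃ κ : V → Fin (d + 1), ProperColoring d K κ

/-- Connectivity of the underlying graph. -/
def Conn (K : Finset (Finset V)) : Prop :=
  ∀ u ∈ verts K, ∀ w ∈ verts K,
    Relation.ReflTransGen (fun a b => ({a, b} : Finset V) ∈ K) u w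

/-- Isomorphism onto. -/
def IsoTo (K : Finset (Finset V)) (L : Finset (Finset W)) : Prop :=
  ∃ f : V → W, Set.InjOn f ↑(verts K) ∧ L = K.image (Finset.image f)

/-- The boundary complex of the `(d+1)`-dimensional cross-polytope. -/
def stdCross (d : ℕ) : Finset (Finset (Fin (d + 1) × Bool)) :=
  (univ : Finset (Fin (d + 1) × Bool)).powerset.filter fun F =>
    F ≠ ∅ ∧ ∀ p ∈ F, ∀ q ∈ F, Prod.fst p = Prod.fst q → p = q

/-- A bistellar flip in dimension `d`. -/
def BisFlip (d : ℕ) (K K' : Finset (Finset V)) : Prop :=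
  ∃ A B : Finset V, A ≠ ∅ ∧ B ≠ ∅ ∧ Disjoint A B ∧ A.card + B.card = d + 2 ∧
    B ∉ K ∧ (∀ F : Finset V, F ≠ ∅ → F ⊆ A ∪ B → ¬B ⊆ F → F ∈ K) ∧
    (∀ F ∈ K, A ⊆ F → F ⊆ A ∪ B) ∧
    K' = K.filter (fun F => ¬A ⊆ F) ∪
      (A ∪ B).powerset.filter (fun F => F ≠ ∅ ∧ ¬A ⊆ F)

/-- The boundary of the `(d+1)`-simplex. -/
def stdBdSimplex (d : ℕ) : Finset (Finset (Fin (d + 2))) :=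
  (univ : Finset (Fin (d + 2))).powerset.filter fun F => F ≠ ∅ ∧ F ≠ univ

/-- A combinatorial `d`-sphere: bistellarly equivalent to the boundary of a simplex
(Pachner's theorem). -/
def IsCombSphere (d : ℕ) (K : Finset (Finset V)) : Prop :=
  ∃ (n : ℕ) (K₀ K₁ : Finset (Finset (Fin n))),
    IsoTo (stdBdSimplex d) K₀ ∧
    Relation.ReflTransGen (fun X Y => BisFlip d X Y ∨ BisFlip d Y X) K₀ K₁ ∧
    IsoTo K₁ K
/-- The faces of the boundary of a pure `d`-dimensional complex. -/
def bdryFaces (d : ℕ) (K : Finset (Finset V)) : Finset (Finset V) :=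
  K.filter fun G => ∃ R ∈ K, G ⊆ R ∧ R.card = d ∧
    (K.filter fun F => F.card = d + 1 ∧ R ⊆ F).card = 1

/-- The complex obtained by coning off the boundary. -/
def coneBdry (d : ℕ) (K : Finset (Finset V)) : Finset (Finset (Option V)) :=
  K.image (Finset.image some) ∪ {({(none : Option V)} : Finset (Option V))} ∪
    (bdryFaces d K).image fun G => insert none (G.image some)

/-- A combinatorial `d`-ball: coning off the boundary gives a combinatorial `d`-sphere. -/
def IsCombBall (d : ℕ) (K : Finset (Finset V)) : Prop :=
  IsCombSphere d (coneBdry d K)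

/-! Since `v` lies neither in a face of `Δ ∖ Φ` nor in a facet of `C` outside `Φ`, the closed
star of `v` in `Δ` is the closed star of `v` in the copy `C` of `∂C_{d+1}`. So the link of `v`
in `Δ` is the link of a vertex of the cross-polytope, spanned by the `2d` vertices of the other
`d` antipodal pairs. -/

theorem mem_stdCross_iff {d : ℕ} {T : Finset (Fin (d + 1) × Bool)} :
    T ∈ stdCross d ↔ T.Nonempty ∧ Set.InjOn Prod.fst (T : Set (Fin (d + 1) × Bool)) := by
  simp [stdCross, Set.InjOn, nonempty_iff_ne_empty]

theorem pair_mem_stdCross_iff {d : ℕ} {p q : Fin (d + 1) × Bool} (hqp : q ≠ p) :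
    {q, p} ∈ stdCross d ↔ q.1 ≠ p.1 := by
  rw [mem_stdCross_iff, coe_pair, Set.injOn_pair]
  simp [hqp]

theorem exists_facet_stdCross_of_fst_ne {d : ℕ} {p q : Fin (d + 1) × Bool} (h : q.1 ≠ p.1) :
    ∃ T ∈ stdCross d, T.card = d + 1 ∧ {q, p} ⊆ T := by
  set b : Fin (d + 1) → Bool := Function.update (fun k => if k = p.1 then p.2 else false) q.1 q.2
  have hinj : Function.Injective fun k => (k, b k) := fun _ _ h => congrArg Prod.fst h
  refine ⟨univ.image fun k => (k, b k), ?_, ?_, ?_⟩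
  · rw [mem_stdCross_iff]
    refine ⟨univ_nonempty.image _, ?_⟩
    rintro _ hx _ hy hxy
    simp only [coe_image, coe_univ, Set.image_univ, Set.mem_range] at hx hy
    obtain ⟨k, rfl⟩ := hx
    obtain ⟨l, rfl⟩ := hy
    simp_all
  · rw [card_image_of_injective _ hinj, card_univ, Fintype.card_fin]
  · refine insert_subset (mem_image.2 ⟨q.1, mem_univ _, by simp [b]⟩) ?_
    exact singleton_subset_iff.2 (mem_image.2 ⟨p.1, mem_univ _, by simp [b, Ne.symm h]⟩)

theorem card_filter_fst_ne {d : ℕ} (a : Fin (d + 1)) :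
    (univ.filter fun q : Fin (d + 1) × Bool => q.1 ≠ a).card = 2 * d := by
  rw [show (univ.filter fun q : Fin (d + 1) × Bool => q.1 ≠ a) = ({a}ᶜ : Finset _) ×ˢ univ by
    ext; simp]
  simp [card_compl, mul_comm]

theorem mem_verts_link_singleton_iff {K : Finset (Finset V)} (hK : IsCplx K) {v w : V} :
    w ∈ verts (link K {v}) ↔ w ≠ v ∧ {w, v} ∈ K := by
  constructor
  · intro hw
    obtain ⟨G, hG, hwG⟩ := mem_sup.1 hw
    obtain ⟨-, hGv, hGvK⟩ := mem_filter.1 hG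
    have hwv : w ≠ v := fun h => disjoint_singleton_right.1 hGv (h ▸ hwG)
    refine ⟨hwv, hK.2 _ hGvK _ ?_ (insert_ne_empty _ _)⟩
    exact insert_subset (mem_union_left _ hwG) (by simp)
  · rintro ⟨hwv, hwvK⟩
    have hwK : {w} ∈ K := hK.2 _ hwvK _ (by simp) (singleton_ne_empty w)
    refine mem_sup.2 ⟨{w}, mem_filter.2 ⟨hwK, ?_, ?_⟩, mem_singleton_self w⟩
    · simpa using hwv
    · simpa [union_comm, pair_comm] using hwvK

theorem verts_link_eq_of_star_eq_stdCross {Δ : Finset (Finset V)} (hΔ : IsCplx Δ) {d : ℕ}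
    {f : Fin (d + 1) × Bool → V} (hf : Function.Injective f) {p : Fin (d + 1) × Bool}
    (hstar_sub : ∀ F ∈ Δ, f p ∈ F → F ∈ (stdCross d).image (image f))
    (hfacet_mem : ∀ T ∈ stdCross d, T.card = d + 1 → p ∈ T → T.image f ∈ Δ) :
    verts (link Δ {f p}) = (univ.filter fun q : Fin (d + 1) × Bool => q.1 ≠ p.1).image f := by
  ext w
  rw [mem_verts_link_singleton_iff hΔ, mem_image]
  constructor
  · rintro ⟨hwp, hpair⟩
    obtain ⟨T, hT, hTeq⟩ := mem_image.1 (hstar_sub _ hpair (by simp))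
    obtain ⟨q, -, rfl⟩ := mem_image.1 (hTeq ▸ mem_insert_self w {f p} : w ∈ T.image f)
    have hqp : q ≠ p := fun h => hwp (h ▸ rfl)
    have hT_pair : T = {q, p} := image_injective hf (by rw [hTeq, image_insert, image_singleton])
    exact ⟨q, mem_filter.2 ⟨mem_univ _, (pair_mem_stdCross_iff hqp).1 (hT_pair ▸ hT)⟩, rfl⟩
  · rintro ⟨q, hq, rfl⟩
    have hqp : q.1 ≠ p.1 := (mem_filter.1 hq).2
    obtain ⟨T, hT, hTcard, hqpT⟩ := exists_facet_stdCross_of_fst_ne hqp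
    refine ⟨hf.ne fun h => hqp (congrArg Prod.fst h), hΔ.2 _ (hfacet_mem T hT hTcard ?_) _ ?_
      (insert_ne_empty _ _)⟩
    · exact hqpT (by simp)
    · rw [← image_singleton f p, ← image_insert]
      exact image_subset_image hqpT

theorem stmt0_general {V : Type} [DecidableEq V] (d : ℕ) (Δ : Finset (Finset V))
    (hcplx : IsCplx Δ)
    (v : V) (hv : ({v} : Finset V) ∈ Δ)
    (hrem : ∃ (Φ C : Finset (Finset V)),
      -- Φ is an induced subcomplex of Δ
      Φ ⊆ Δ ∧ Φ = Δ.filter (fun F => F ⊆ verts Φ) ∧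
      -- Φ is a d-ball
      IsCombBall d Φ ∧
      -- C is a copy of ∂C_{d+1} containing Φ as a subcomplex
      (∃ f : Fin (d + 1) × Bool → V, Function.Injective f ∧
        C = (stdCross d).image (Finset.image f)) ∧
      Φ ⊆ C ∧
      -- the new vertices are fresh
      Disjoint (verts C \ verts Φ) (verts Δ) ∧
      -- v is not a vertex of the flipped complex χ_Φ(Δ) = (Δ ∖ Φ) ∪ (C ∖ Φ)
      v ∉ verts ((Δ \ Φ) ∪
        (C.filter fun G => ∃ H ∈ C, G ⊆ H ∧ H.card = d + 1 ∧ H ∉ Φ))) :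
    (verts (link Δ ({v} : Finset V))).card = 2 * d := by
  obtain ⟨Φ, C, hΦΔ, -, -, ⟨f, hf, rfl⟩, hΦC, -, hv_flip⟩ := hrem
  have hstar_Φ : ∀ F ∈ Δ, v ∈ F → F ∈ Φ := fun F hF hvF => by
    by_contra hFΦ
    exact hv_flip (mem_sup.2 ⟨F, mem_union_left _ (mem_sdiff.2 ⟨hF, hFΦ⟩), hvF⟩)
  have hvC := hΦC (hstar_Φ _ hv (mem_singleton_self v))
  obtain ⟨S, -, hS⟩ := mem_image.1 hvC
  obtain ⟨p, -, rfl⟩ := mem_image.1 (hS ▸ mem_singleton_self v : v ∈ S.image f)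
  have hfacet_Δ : ∀ T ∈ stdCross d, T.card = d + 1 → p ∈ T → T.image f ∈ Δ := by
    intro T hT hTcard hpT
    by_contra hTΔ
    refine hv_flip (mem_sup.2 ⟨{f p}, mem_union_right _ (mem_filter.2 ⟨hvC, ?_⟩), by simp⟩)
    refine ⟨T.image f, mem_image_of_mem _ hT, by simpa using mem_image_of_mem f hpT, ?_,
      fun hTΦ => hTΔ (hΦΔ hTΦ)⟩
    rw [card_image_of_injective _ hf, hTcard]
  rw [verts_link_eq_of_star_eq_stdCross hcplx hf (fun F hF hpF => hΦC (hstar_Φ F hF hpF))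
    hfacet_Δ, card_image_of_injective _ hf, card_filter_fst_ne]

/-- If a vertex `v` of a pure `d`-dimensional balanced complex `Δ` is removable by a
cross-flip (there is a cross-flip `χ_Φ` with `v ∉ χ_Φ(Δ)`), then the link of `v` has
exactly `2d` vertices. -/
theorem stmt0 {V : Type} [DecidableEq V] (d : ℕ) (Δ : Finset (Finset V))
    (hcplx : IsCplx Δ) (hpure : PureC d Δ) (hbal : BalancedC d Δ)
    (v : V) (hv : ({v} : Finset V) ∈ Δ)
    (hrem : ∃ (Φ C : Finset (Finset V)),
      -- Φ is an induced subcomplex of Δ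
      Φ ⊆ Δ ∧ Φ = Δ.filter (fun F => F ⊆ verts Φ) ∧
      -- Φ is a d-ball
      IsCombBall d Φ ∧
      -- C is a copy of ∂C_{d+1} containing Φ as a subcomplex
      (∃ f : Fin (d + 1) × Bool → V, Function.Injective f ∧
        C = (stdCross d).image (Finset.image f)) ∧
      Φ ⊆ C ∧
      -- the new vertices are fresh
      Disjoint (verts C \ verts Φ) (verts Δ) ∧
      -- v is not a vertex of the flipped complex χ_Φ(Δ) = (Δ ∖ Φ) ∪ (C ∖ Φ)
      v ∉ verts ((Δ \ Φ) ∪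
        (C.filter fun G => ∃ H ∈ C, G ⊆ H ∧ H.card = d + 1 ∧ H ∉ Φ))) :
    (verts (link Δ ({v} : Finset V))).card = 2 * d :=
  stmt0_general d Δ hcplx v hv hrem
end

section
/- Let Δ be a balanced 2-dimensional Cohen-Macaulay simplicial complex that is not shellable, such that every edge of Δ is contained in at least two triangles. Then each of the three color classes of Δ contains at least three vertices. -/
open Finset

variable {V : Type} [DecidableEq V] {W : Type} [DecidableEq W]

/-- Shellability. -/
def Shellable (d : ℕ) (K : Finset (Finset V)) : Prop :=
  PureC d K ∧
  ∃ l : List (Finset V), l.Nodup ∧ l.toFinset = K.filter (fun F => F.card = d + 1) ∧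
    ∀ i : Fin l.length, i.val ≠ 0 → ∀ G, G ≠ ∅ → G ⊆ l.get i →
      (∃ j : Fin l.length, j < i ∧ G ⊆ l.get j) →
      ∃ H, H.card = d ∧ G ⊆ H ∧ H ⊆ l.get i ∧ ∃ j : Fin l.length, j < i ∧ H ⊆ l.get j
/-- The simplicial boundary of an oriented simplex, with coefficients in `k`. -/
noncomputable def bd1 (k : Type) [Field k] [LinearOrder V] (F : Finset V) :
    (Finset V) →₀ k :=
  (((F.sort (· ≤ ·)).zipIdx.map Prod.swap).map fun p =>
    ((-1 : k) ^ p.1) • Finsupp.single (F.erase p.2) (1 : k)).sum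

/-- The simplicial boundary operator on chains (including the augmentation). -/
noncomputable def Dbd (k : Type) [Field k] [LinearOrder V] (z : (Finset V) →₀ k) :
    (Finset V) →₀ k :=
  z.sum fun F a => a • bd1 k F

/-- A reduced simplicial `i`-cycle of `K`. -/
def IsCyc (k : Type) [Field k] [LinearOrder V] (K : Finset (Finset V)) (i : ℕ)
    (z : (Finset V) →₀ k) : Prop :=
  ↑z.support ⊆ {G : Finset V | G ∈ K ∧ G.card = i + 1} ∧ Dbd k z = 0

/-- A reduced simplicial `i`-boundary of `K`. -/
def IsBdr (k : Type) [Field k] [LinearOrder V] (K : Finset (Finset V)) (i : ℕ)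
    (z : (Finset V) →₀ k) : Prop :=
  ∃ c : (Finset V) →₀ k,
    ↑c.support ⊆ {G : Finset V | G ∈ K ∧ G.card = i + 2} ∧ Dbd k c = z

/-- Vanishing of the `i`-th reduced homology with coefficients in `k`. -/
def HVanish (k : Type) [Field k] [LinearOrder V] (K : Finset (Finset V)) (i : ℕ) : Prop :=
  ∀ z, IsCyc k K i z → IsBdr k K i z

/-- The `m`-th reduced homology is one-dimensional over `k`. -/
def HTopOne (k : Type) [Field k] [LinearOrder V] (K : Finset (Finset V)) (m : ℕ) : Prop :=
  (∃ z, IsCyc k K m z ∧ ¬IsBdr k K m z) ∧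
  ∀ z₁ z₂, IsCyc k K m z₁ → IsCyc k K m z₂ →
    ∃ a b : k, ¬(a = 0 ∧ b = 0) ∧ IsBdr k K m (a • z₁ + b • z₂)

/-- A `k`-homology `d`-sphere. -/
def IsHomSphere (d : ℕ) (k : Type) [Field k] [LinearOrder V] (K : Finset (Finset V)) : Prop :=
  (∀ i, i < d → HVanish k K i) ∧ HTopOne k K d

/-- A `k`-homology `d`-manifold: the link of every nonempty face has the reduced
homology of a sphere of the appropriate dimension. -/
def IsHomManifold (d : ℕ) (k : Type) [Field k] [LinearOrder V] (K : Finset (Finset V)) : Prop :=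
  IsCplx K ∧ PureC d K ∧
    ∀ F ∈ K, F.card ≤ d → IsHomSphere (d - F.card) k (link K F)


/-- Cohen–Macaulayness over `k` of a 2-dimensional complex (Reisner's criterion):
the reduced homology of the complex vanishes in degrees 0 and 1, and the reduced
0-th homology of each vertex link vanishes. -/
def IsCM2 (k : Type) [Field k] {V : Type} [DecidableEq V] [LinearOrder V]
    (K : Finset (Finset V)) : Prop :=
  IsCplx K ∧ K.Nonempty ∧ PureC 2 K ∧
  HVanish k K 0 ∧ HVanish k K 1 ∧
  ∀ v : V, ({v} : Finset V) ∈ K → HVanish k (link K ({v} : Finset V)) 0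

/-!
If a colour class `A` had at most two vertices, then, since every triangle has exactly one vertex
in `A`, the triangles through an edge `e` avoiding `A` are among the `e ∪ {v}` with `v ∈ A`. As
each edge lies in two triangles, `A = {v₁, v₂}` and both `e ∪ {v₁}` and `e ∪ {v₂}` are triangles:
`Δ` is the suspension of the graph `lk v₁`, which is connected since `Δ` is Cohen–Macaulay.
Ordering the edges of a connected graph so that each one meets an earlier one gives a shelling,
and coning it off from `v₁` and then from `v₂` shells `Δ`.
-/

theorem IsCplx.mem_of_subset {V : Type} {K : Finset (Finset V)} (hK : IsCplx K) {F G : Finset V}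
    (hF : F ∈ K) (hGF : G ⊆ F) (hG : G.Nonempty) : G ∈ K :=
  hK.2 F hF G hGF hG.ne_empty

theorem IsCplx.link {K : Finset (Finset V)} (hK : IsCplx K) (F : Finset V) :
    IsCplx (link K F) := by
  refine ⟨fun h => hK.1 (mem_filter.1 h).1, fun G hG G' hG'G hG' => ?_⟩
  obtain ⟨hGK, hGF, hGFK⟩ := mem_filter.1 hG
  have hne : G'.Nonempty := nonempty_iff_ne_empty.2 hG'
  exact mem_filter.2 ⟨hK.mem_of_subset hGK hG'G hne, hGF.mono_left hG'G,
    hK.mem_of_subset hGFK (union_subset_union hG'G subset_rfl) (hne.mono subset_union_left)⟩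

theorem IsCplx.singleton_mem {K : Finset (Finset V)} {v : V} (hK : IsCplx K)
    (hv : v ∈ verts K) : {v} ∈ K := by
  obtain ⟨F, hF, hvF⟩ := mem_sup.1 hv
  exact hK.mem_of_subset hF (singleton_subset_iff.2 hvF) (singleton_nonempty v)

theorem mem_link_singleton {K : Finset (Finset V)} {v : V} {G : Finset V} :
    G ∈ link K {v} ↔ G ∈ K ∧ v ∉ G ∧ insert v G ∈ K := by
  simp [link, union_singleton]

section Shelling

/-- The shelling condition: `⟨P⟩ ∩ ⟨F⟩` is pure with facets of `d` vertices. -/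
def IntersectsPurely (d : ℕ) (P : List (Finset V)) (F : Finset V) : Prop :=
  ∀ G : Finset V, G.Nonempty → G ⊆ F → (∃ F' ∈ P, G ⊆ F') →
    ∃ H : Finset V, H.card = d ∧ G ⊆ H ∧ H ⊆ F ∧ ∃ F' ∈ P, H ⊆ F'

def IsShellingOrder (d : ℕ) (l : List (Finset V)) : Prop :=
  ∀ i (hi : i < l.length), i ≠ 0 → IntersectsPurely d (l.take i) l[i]

def IsConnectedOrder (l : List (Finset V)) : Prop :=
  ∀ i (hi : i < l.length), i ≠ 0 → ∃ F ∈ l.take i, (l[i] ∩ F).Nonempty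

theorem intersectsPurely_nil {V : Type} (d : ℕ) (F : Finset V) : IntersectsPurely d [] F := by
  simp [IntersectsPurely]

theorem IntersectsPurely.map_insert {d : ℕ} {P : List (Finset V)} {F : Finset V} {v : V}
    (h : IntersectsPurely d P F) (hmeet : ∃ F' ∈ P, (F ∩ F').Nonempty) (hv : v ∉ F) :
    IntersectsPurely (d + 1) (P.map (insert v)) (insert v F) := by
  intro G _ hGF ⟨_, hX, hGX⟩
  obtain ⟨F', hF', rfl⟩ := List.mem_map.1 hX
  -- if `G` is just the apex, replace it by a vertex where `F` meets `P`
  obtain ⟨G', hG', hG'F, hG'P, hGG'⟩ : ∃ G' : Finset V, G'.Nonempty ∧ G' ⊆ F ∧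
      (∃ F' ∈ P, G' ⊆ F') ∧ G.erase v ⊆ G' := by
    rcases (G.erase v).eq_empty_or_nonempty with he | hne
    · obtain ⟨F'', hF'', x, hx⟩ := hmeet
      exact ⟨{x}, singleton_nonempty x, singleton_subset_iff.2 (mem_inter.1 hx).1,
        ⟨F'', hF'', singleton_subset_iff.2 (mem_inter.1 hx).2⟩, he ▸ empty_subset _⟩
    · exact ⟨G.erase v, hne, subset_insert_iff.1 hGF, ⟨F', hF', subset_insert_iff.1 hGX⟩,
        subset_rfl⟩
  obtain ⟨H, hH, hG'H, hHF, F'', hF'', hHF''⟩ := h G' hG' hG'F hG'P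
  refine ⟨insert v H, ?_, subset_insert_iff.2 (hGG'.trans hG'H), insert_subset_insert v hHF,
    _, List.mem_map_of_mem hF'', insert_subset_insert v hHF''⟩
  rw [card_insert_of_notMem fun hvH => hv (hHF hvH), hH]

theorem IntersectsPurely.append_left {d : ℕ} {Q₁ Q₂ : List (Finset V)} {F : Finset V} {v : V}
    (h : IntersectsPurely (d + 1) Q₂ (insert v F)) (hF : F.card = d + 1)
    (hFQ : ∃ X ∈ Q₁, F ⊆ X) (hvQ : ∀ X ∈ Q₁, v ∉ X) :
    IntersectsPurely (d + 1) (Q₁ ++ Q₂) (insert v F) := by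
  intro G hG hGF ⟨X, hX, hGX⟩
  rcases List.mem_append.1 hX with hX | hX
  · obtain ⟨Y, hY, hFY⟩ := hFQ
    have hGF' : G ⊆ F := (subset_insert_iff_of_notMem fun hv => hvQ X hX (hGX hv)).1 hGF
    exact ⟨F, hF, hGF', subset_insert v F, Y, List.mem_append_left _ hY, hFY⟩
  · obtain ⟨H, hH, hGH, hHF, Y, hY, hHY⟩ := h G hG hGF ⟨X, hX, hGX⟩
    exact ⟨H, hH, hGH, hHF, Y, List.mem_append_right _ hY, hHY⟩

theorem IsShellingOrder.append {V : Type} {d : ℕ} {l₁ l₂ : List (Finset V)}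
    (h₁ : IsShellingOrder d l₁)
    (h₂ : ∀ i (hi : i < l₂.length), IntersectsPurely d (l₁ ++ l₂.take i) l₂[i]) :
    IsShellingOrder d (l₁ ++ l₂) := by
  intro i hi hi0
  rcases lt_or_ge i l₁.length with h | h
  · rw [List.take_append_of_le_length h.le, List.getElem_append_left h]
    exact h₁ i h hi0
  · rw [List.take_append, List.take_of_length_le h, List.getElem_append_right h]
    exact h₂ _ _

theorem IsShellingOrder.suspension {d : ℕ} {l : List (Finset V)} {v₁ v₂ : V}
    (hsh : IsShellingOrder d l) (hconn : IsConnectedOrder l) (hcard : ∀ F ∈ l, F.card = d + 1)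
    (hv₁ : ∀ F ∈ l, v₁ ∉ F) (hv₂ : ∀ F ∈ l, v₂ ∉ F) (hne : v₁ ≠ v₂) :
    IsShellingOrder (d + 1) (l.map (insert v₁) ++ l.map (insert v₂)) := by
  have cone : ∀ v, (∀ F ∈ l, v ∉ F) → ∀ i (hi : i < l.length), i ≠ 0 →
      IntersectsPurely (d + 1) ((l.take i).map (insert v)) (insert v l[i]) := fun v hv i hi hi0 =>
    (hsh i hi hi0).map_insert (hconn i hi hi0) (hv _ (List.getElem_mem hi))
  refine IsShellingOrder.append (fun i hi hi0 => ?_) (fun i hi => ?_) <;>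
    simp only [← List.map_take, List.getElem_map] <;> rw [List.length_map] at hi
  · exact cone v₁ hv₁ i hi hi0
  · refine IntersectsPurely.append_left ?_ (hcard _ (List.getElem_mem hi))
      ⟨_, List.mem_map_of_mem (List.getElem_mem hi), subset_insert v₁ _⟩ ?_
    · rcases eq_or_ne i 0 with rfl | hi0
      · exact intersectsPurely_nil _ _
      · exact cone v₂ hv₂ i hi hi0
    · simp only [List.mem_map, forall_exists_index, and_imp, forall_apply_eq_imp_iff₂,
        mem_insert, not_or]
      exact fun F hF => ⟨hne.symm, hv₂ F hF⟩

theorem shellable_of_isShellingOrder {d : ℕ} {K : Finset (Finset V)} (hK : PureC d K)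
    {l : List (Finset V)} (hnd : l.Nodup) (hl : l.toFinset = K.filter fun F => F.card = d + 1)
    (hsh : IsShellingOrder d l) : Shellable d K := by
  refine ⟨hK, l, hnd, hl, fun i hi0 G hG hGi ⟨j, hji, hGj⟩ => ?_⟩
  obtain ⟨H, hH, hGH, hHi, F', hF', hHF'⟩ := hsh i i.isLt hi0 G (nonempty_iff_ne_empty.2 hG)
    hGi ⟨l[j], List.mem_take_iff_getElem.2 ⟨j, by simp; omega, rfl⟩, hGj⟩
  obtain ⟨j', hj', rfl⟩ := List.mem_take_iff_getElem.1 hF'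
  exact ⟨H, hH, hGH, hHi, ⟨j', by omega⟩, by simp only [Fin.lt_def]; omega, hHF'⟩

theorem shellable_suspension {d : ℕ} {K : Finset (Finset V)} {l : List (Finset V)} {v₁ v₂ : V}
    (hK : PureC (d + 1) K) (hnd : l.Nodup) (hcard : ∀ F ∈ l, F.card = d + 1)
    (hsh : IsShellingOrder d l) (hconn : IsConnectedOrder l) (hne : v₁ ≠ v₂)
    (hfac : K.filter (fun T => T.card = d + 1 + 1) =
      l.toFinset.image (insert v₁) ∪ l.toFinset.image (insert v₂)) :
    Shellable (d + 1) K := by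
  have hapex : ∀ v, (∀ F ∈ l, insert v F ∈ K.filter fun T => T.card = d + 1 + 1) →
      ∀ F ∈ l, v ∉ F := fun v hv F hF hvF => by
    have := (mem_filter.1 (hv F hF)).2
    rw [insert_eq_of_mem hvF, hcard F hF] at this
    omega
  have hv₁ := hapex v₁ fun F hF =>
    hfac ▸ mem_union_left _ (mem_image_of_mem _ (List.mem_toFinset.2 hF))
  have hv₂ := hapex v₂ fun F hF =>
    hfac ▸ mem_union_right _ (mem_image_of_mem _ (List.mem_toFinset.2 hF))
  have hinj : ∀ v, (∀ F ∈ l, v ∉ F) → ∀ F ∈ l, ∀ G ∈ l, insert v F = insert v G → F = G :=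
    fun v hv F hF G hG h => by rw [← erase_insert (hv F hF), h, erase_insert (hv G hG)]
  refine shellable_of_isShellingOrder hK ?_ ?_ (hsh.suspension hconn hcard hv₁ hv₂ hne)
  · refine (hnd.map_on (hinj v₁ hv₁)).append (hnd.map_on (hinj v₂ hv₂)) ?_
    simp only [List.disjoint_left, List.mem_map, not_exists, not_and, forall_exists_index, and_imp]
    rintro _ F hF rfl G hG h
    have : v₂ ∈ insert v₁ F := h ▸ mem_insert_self v₂ G
    exact (mem_insert.1 this).elim hne.symm (hv₂ F hF)
  · rw [hfac]
    ext
    simp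

end Shelling

section Graph

theorem isShellingOrder_one_of_nodup {V : Type} {l : List (Finset V)} (hnd : l.Nodup)
    (hcard : ∀ F ∈ l, F.card = 2) : IsShellingOrder 1 l := by
  intro i hi _ G hG hGi ⟨F, hF, hGF⟩
  obtain ⟨j, hj, rfl⟩ := List.mem_take_iff_getElem.1 hF
  have hji : l[i] ≠ l[j] := by rw [Ne, hnd.getElem_inj_iff]; omega
  -- two distinct edges share at most one vertex
  have hG1 : G.card = 1 := by
    have hle : G.card ≤ 2 := hcard _ (List.getElem_mem hi) ▸ card_le_card hGi
    have hne : G.card ≠ 2 := fun h2 => hji <|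
      ((eq_of_subset_of_card_le hGi (by rw [h2, hcard _ (List.getElem_mem hi)])).symm.trans
        (eq_of_subset_of_card_le hGF (by rw [h2, hcard _ (List.getElem_mem _)])))
    have := hG.card_pos
    omega
  exact ⟨G, hG1, subset_rfl, hGi, _, hF, hGF⟩

theorem IsConnectedOrder.concat {l : List (Finset V)} {g : Finset V} (hl : IsConnectedOrder l)
    (hg : ∃ F ∈ l, (g ∩ F).Nonempty) : IsConnectedOrder (l ++ [g]) := by
  intro i hi hi0
  rw [List.length_append, List.length_singleton] at hi
  rcases Nat.lt_or_ge i l.length with h | h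
  · rw [List.take_append_of_le_length h.le, List.getElem_append_left h]
    exact hl i h hi0
  · obtain rfl : i = l.length := by omega
    simpa using hg

theorem exists_edge_meeting_of_conn {L S : Finset (Finset V)} (hL : Conn L)
    (hS : S ⊆ L.filter fun F => F.card = 2) (hSne : S.Nonempty) {g : Finset V}
    (hg : g ∈ L.filter fun F => F.card = 2) (hgS : g ∉ S) :
    ∃ g' ∈ L.filter (fun F => F.card = 2), g' ∉ S ∧ ∃ F ∈ S, (g' ∩ F).Nonempty := by
  by_contra! hcon
  obtain ⟨F₀, hF₀⟩ := hSne
  have hcard : ∀ F ∈ L.filter (fun F => F.card = 2), F.Nonempty := fun F hF =>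
    card_pos.1 (by rw [(mem_filter.1 hF).2]; omega)
  obtain ⟨a, ha⟩ := hcard F₀ (hS hF₀)
  obtain ⟨b, hb⟩ := hcard g hg
  have hmem : ∀ F ∈ L, ∀ x ∈ F, x ∈ verts L := fun F hF x hx => mem_sup.2 ⟨F, hF, hx⟩
  have hpath :=
    hL a (hmem F₀ (mem_filter.1 (hS hF₀)).1 a ha) b (hmem g (mem_filter.1 hg).1 b hb)
  -- the vertices covered by `S` are closed under the edges of `L`
  have hcovered : ∃ F ∈ S, b ∈ F := by
    clear hb
    induction hpath with
    | refl => exact ⟨F₀, hF₀, ha⟩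
    | @tail u w _ huw ih =>
      obtain ⟨F, hF, huF⟩ := ih
      rcases eq_or_ne u w with rfl | hne
      · exact ⟨F, hF, huF⟩
      by_cases hS' : {u, w} ∈ S
      · exact ⟨_, hS', mem_insert_of_mem (mem_singleton_self w)⟩
      · exact absurd ⟨u, mem_inter.2 ⟨mem_insert_self u _, huF⟩⟩
          (not_nonempty_iff_eq_empty.2 (hcon _ (mem_filter.2 ⟨huw, card_pair hne⟩) hS' F hF))
  obtain ⟨F, hF, hbF⟩ := hcovered
  exact not_nonempty_iff_eq_empty.2 (hcon g hg hgS F hF) ⟨b, mem_inter.2 ⟨hb, hbF⟩⟩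

theorem exists_isConnectedOrder_of_conn {L : Finset (Finset V)} (hL : Conn L) :
    ∃ l : List (Finset V), l.Nodup ∧ l.toFinset = (L.filter fun F => F.card = 2) ∧
      IsConnectedOrder l := by
  set E := L.filter fun F => F.card = 2
  rcases E.eq_empty_or_nonempty with hE | ⟨e₀, he₀⟩
  · exact ⟨[], List.nodup_nil, by simp [hE], fun i hi => absurd hi (Nat.not_lt_zero i)⟩
  have grow : ∀ n, n < E.card → ∃ l : List (Finset V), l.Nodup ∧ l.toFinset ⊆ E ∧
      l.length = n + 1 ∧ IsConnectedOrder l := by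
    intro n
    induction n with
    | zero => exact fun _ => ⟨[e₀], List.nodup_singleton e₀, by simpa using he₀, rfl,
        fun i hi hi0 => absurd hi (by simpa using hi0)⟩
    | succ n ih =>
      intro hn
      obtain ⟨l, hnd, hlE, hlen, hl⟩ := ih (by omega)
      have hss : l.toFinset ⊂ E := ssubset_of_subset_of_ne hlE fun h => by
        have := congrArg card h
        rw [List.toFinset_card_of_nodup hnd] at this
        omega
      obtain ⟨g, hg, hgl⟩ := exists_of_ssubset hss
      have hlne : l.toFinset.Nonempty := ⟨l[0], List.mem_toFinset.2 (List.getElem_mem _)⟩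
      obtain ⟨g', hg', hg'l, F, hF, hmeet⟩ :=
        exists_edge_meeting_of_conn hL hlE hlne hg hgl
      rw [List.mem_toFinset] at hg'l hF
      refine ⟨l ++ [g'], hnd.append (List.nodup_singleton g') (by simpa using hg'l), ?_,
        by simp [hlen], hl.concat ⟨F, hF, hmeet⟩⟩
      simpa [insert_subset_iff] using ⟨hg', hlE⟩
  have hpos : 0 < E.card := card_pos.2 ⟨e₀, he₀⟩
  obtain ⟨l, hnd, hlE, hlen, hl⟩ := grow (E.card - 1) (by omega)
  refine ⟨l, hnd, eq_of_subset_of_card_le hlE ?_, hl⟩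
  rw [List.toFinset_card_of_nodup hnd, hlen]
  omega

end Graph

section Homology

variable [LinearOrder V] (k : Type) [Field k]

theorem Dbd_eq_linearCombination (z : Finset V →₀ k) :
    Dbd k z = Finsupp.linearCombination k (bd1 k) z :=
  (Finsupp.linearCombination_apply k z).symm

theorem bd1_singleton (x : V) : bd1 k {x} = Finsupp.single ∅ 1 := by
  simp [bd1, sort_singleton]

theorem bd1_pair {a b : V} (hab : a < b) :
    bd1 k {a, b} = Finsupp.single {b} 1 - Finsupp.single {a} 1 := by
  have hsort : ({a, b} : Finset V).sort (· ≤ ·) = [a, b] := by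
    rw [sort_insert _ (by simpa using hab.le) (by simpa using hab.ne), sort_singleton]
  simp [bd1, hsort, erase_insert_of_ne hab.ne, erase_eq_of_notMem (notMem_singleton.2 hab.ne),
    sub_eq_add_neg]

theorem isCyc_zero_single_sub_single {L : Finset (Finset V)} {x y : V} (hx : {x} ∈ L)
    (hy : {y} ∈ L) : IsCyc k L 0 (Finsupp.single {x} 1 - Finsupp.single {y} 1) := by
  refine ⟨fun G hG => ?_, ?_⟩
  · rcases mem_union.1 (Finsupp.support_sub hG) with h | h <;>
      obtain rfl := mem_singleton.1 (Finsupp.support_single_subset h) <;> simpa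
  · simp [Dbd_eq_linearCombination, bd1_singleton]

theorem conn_of_hVanish_zero {L : Finset (Finset V)} (hL : IsCplx L) (hv : HVanish k L 0) :
    Conn L := by
  classical
  intro x hx y hy
  by_contra hxy
  obtain ⟨c, hc, hcz⟩ := hv _ (isCyc_zero_single_sub_single k (hL.singleton_mem hx)
    (hL.singleton_mem hy))
  -- the indicator of the component of `x` kills boundaries of edges but not `[x] - [y]`
  set S : Set V := {w | Relation.ReflTransGen (fun a b => ({a, b} : Finset V) ∈ L) x w}
  set φ := Finsupp.linearCombination k fun G : Finset V => if ∃ u ∈ G, u ∈ S then (1 : k) else 0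
  have hφ : ∀ u : V, φ (Finsupp.single {u} 1) = if u ∈ S then 1 else 0 := by simp [φ]
  have hedge : ∀ E ∈ c.support, φ (bd1 k E) = 0 := by
    intro E hE
    obtain ⟨hEL, hE2⟩ := hc hE
    obtain ⟨a, b, hab, rfl⟩ := card_eq_two.1 hE2
    have hiff : a ∈ S ↔ b ∈ S :=
      ⟨fun h => h.tail hEL, fun h => h.tail (pair_comm a b ▸ hEL)⟩
    rcases hab.lt_or_gt with hlt | hlt
    · rw [bd1_pair k hlt, map_sub, hφ, hφ]
      simp only [hiff, sub_self]
    · rw [pair_comm, bd1_pair k hlt, map_sub, hφ, hφ]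
      simp only [hiff, sub_self]
  have h0 : φ (Dbd k c) = 0 := by
    rw [Dbd, map_finsuppSum]
    exact sum_eq_zero fun E hE => by simp only [map_smul, hedge E hE, smul_zero]
  rw [hcz, map_sub, hφ, hφ, if_pos (show x ∈ S from .refl), if_neg (show y ∉ S from hxy),
    sub_zero] at h0
  exact one_ne_zero h0

end Homology

section Coloring

variable {d : ℕ} {K : Finset (Finset V)} {κ : V → Fin (d + 1)}

def colorClass (K : Finset (Finset V)) (κ : V → Fin (d + 1)) (c : Fin (d + 1)) : Finset V :=
  (verts K).filter fun v => κ v = c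

theorem ProperColoring.ne {V : Type} {d : ℕ} {K : Finset (Finset V)} {κ : V → Fin (d + 1)}
    (hκ : ProperColoring d K κ) {T : Finset V} (hT : T ∈ K) {x y : V}
    (hx : x ∈ T) (hy : y ∈ T) (hxy : x ≠ y) : κ x ≠ κ y :=
  fun h => hxy (hκ T hT hx hy h)

theorem ProperColoring.exists_mem_eq {V : Type} {d : ℕ} {K : Finset (Finset V)}
    {κ : V → Fin (d + 1)} (hκ : ProperColoring d K κ) {T : Finset V} (hT : T ∈ K)
    (hTcard : T.card = d + 1) (c : Fin (d + 1)) : ∃ v ∈ T, κ v = c := by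
  have himg : T.image κ = univ := eq_of_subset_of_card_le (subset_univ _) (by
    rw [card_image_of_injOn (hκ T hT), hTcard, card_univ, Fintype.card_fin])
  simpa using (himg ▸ mem_univ c : c ∈ T.image κ)

theorem ProperColoring.filter_superset_subset_image (hκ : ProperColoring d K κ) {c : Fin (d + 1)}
    {e : Finset V} (he : e.card = d) (hec : ∀ x ∈ e, κ x ≠ c) :
    (K.filter fun T => T.card = d + 1 ∧ e ⊆ T) ⊆ (colorClass K κ c).image (insert · e) := by
  intro T hT
  obtain ⟨hTK, hTcard, heT⟩ := mem_filter.1 hT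
  obtain ⟨v, hvT, hvc⟩ := hκ.exists_mem_eq hTK hTcard c
  refine mem_image.2 ⟨v, mem_filter.2 ⟨mem_sup.2 ⟨T, hTK, hvT⟩, hvc⟩, ?_⟩
  refine eq_of_subset_of_card_le (insert_subset hvT heT) ?_
  rw [hTcard, card_insert_of_notMem fun hv => hec v hv hvc, he]

theorem ProperColoring.insert_mem_of_card_colorClass_le (hκ : ProperColoring d K κ)
    {c : Fin (d + 1)} {e : Finset V} (he : e.card = d) (hec : ∀ x ∈ e, κ x ≠ c)
    (hcard : (colorClass K κ c).card ≤ (K.filter fun T => T.card = d + 1 ∧ e ⊆ T).card)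
    {v : V} (hv : v ∈ colorClass K κ c) : insert v e ∈ K := by
  have := eq_of_subset_of_card_le (hκ.filter_superset_subset_image he hec)
    (card_image_le.trans hcard)
  exact (mem_filter.1 (this ▸ mem_image_of_mem _ hv)).1

theorem ProperColoring.two_le_card_colorClass (hκ : ProperColoring d K κ) (hK : IsCplx K)
    (hpure : PureC d K) (hKne : K.Nonempty) (hd : d ≠ 0)
    (hedge : ∀ e ∈ K, e.card = d → 2 ≤ (K.filter fun T => T.card = d + 1 ∧ e ⊆ T).card)
    (c : Fin (d + 1)) : 2 ≤ (colorClass K κ c).card := by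
  obtain ⟨F, hF⟩ := hKne
  obtain ⟨T, hT, -, hTcard⟩ := hpure.2 F hF
  obtain ⟨v, hvT, hvc⟩ := hκ.exists_mem_eq hT hTcard c
  have hecard : (T.erase v).card = d := by rw [card_erase_of_mem hvT, hTcard, Nat.add_sub_cancel]
  have he : T.erase v ∈ K := hK.mem_of_subset hT (erase_subset v T) (card_pos.1 (by omega))
  refine (hedge _ he hecard).trans (card_le_card (hκ.filter_superset_subset_image hecard ?_)
    |>.trans card_image_le)
  exact fun x hx => hvc ▸ hκ.ne hT (mem_of_mem_erase hx) hvT (ne_of_mem_erase hx)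

theorem ProperColoring.facets_eq_suspension_link (hκ : ProperColoring d K κ) (hK : IsCplx K)
    (hd : d ≠ 0)
    (hedge : ∀ e ∈ K, e.card = d → 2 ≤ (K.filter fun T => T.card = d + 1 ∧ e ⊆ T).card)
    {c : Fin (d + 1)} {v₁ v₂ : V} (hA : colorClass K κ c = {v₁, v₂}) :
    K.filter (fun T => T.card = d + 1) =
      ((link K {v₁}).filter fun e => e.card = d).image (insert v₁) ∪
        ((link K {v₁}).filter fun e => e.card = d).image (insert v₂) := by
  have hcol : ∀ v ∈ colorClass K κ c, κ v = c := fun v hv => (mem_filter.1 hv).2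
  have hins : ∀ e ∈ K, e.card = d → (∀ x ∈ e, κ x ≠ c) → ∀ v ∈ colorClass K κ c,
      insert v e ∈ K := fun e he hecard hec _ hv =>
    hκ.insert_mem_of_card_colorClass_le hecard hec
      (hA ▸ card_le_two.trans (hedge e he hecard)) hv
  ext T
  simp only [mem_filter, mem_union, mem_image, mem_link_singleton]
  constructor
  · rintro ⟨hT, hTcard⟩
    obtain ⟨v, hvT, hvc⟩ := hκ.exists_mem_eq hT hTcard c
    have hvA : v ∈ colorClass K κ c := mem_filter.2 ⟨mem_sup.2 ⟨T, hT, hvT⟩, hvc⟩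
    have hecard : (T.erase v).card = d := by
      rw [card_erase_of_mem hvT, hTcard, Nat.add_sub_cancel]
    have he : T.erase v ∈ K := hK.mem_of_subset hT (erase_subset v T) (card_pos.1 (by omega))
    have hec : ∀ x ∈ T.erase v, κ x ≠ c := fun x hx =>
      hvc ▸ hκ.ne hT (mem_of_mem_erase hx) hvT (ne_of_mem_erase hx)
    have hv₁A : v₁ ∈ colorClass K κ c := hA ▸ mem_insert_self v₁ {v₂}
    have hlink : (T.erase v ∈ K ∧ v₁ ∉ T.erase v ∧ insert v₁ (T.erase v) ∈ K) ∧
        (T.erase v).card = d :=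
      ⟨⟨he, fun h => hec v₁ h (hcol v₁ hv₁A), hins _ he hecard hec v₁ hv₁A⟩, hecard⟩
    rw [hA, mem_insert, mem_singleton] at hvA
    rcases hvA with rfl | rfl
    · exact Or.inl ⟨_, hlink, insert_erase hvT⟩
    · exact Or.inr ⟨_, hlink, insert_erase hvT⟩
  · rintro (⟨e, ⟨⟨he, hv₁e, hv₁eK⟩, hecard⟩, rfl⟩ |
      ⟨e, ⟨⟨he, hv₁e, hv₁eK⟩, hecard⟩, rfl⟩)
    · exact ⟨hv₁eK, by rw [card_insert_of_notMem hv₁e, hecard]⟩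
    · have hec : ∀ x ∈ e, κ x ≠ c := fun x hx =>
        hcol v₁ (hA ▸ mem_insert_self v₁ {v₂}) ▸
          hκ.ne hv₁eK (mem_insert_of_mem hx) (mem_insert_self v₁ e)
            (ne_of_mem_of_not_mem hx hv₁e)
      have hv₂A : v₂ ∈ colorClass K κ c := hA ▸ mem_insert_of_mem (mem_singleton_self v₂)
      refine ⟨hins e he hecard hec v₂ hv₂A, ?_⟩
      rw [card_insert_of_notMem fun h => hec v₂ h (hcol v₂ hv₂A), hecard]

end Coloring

/-- A balanced 2-dimensional Cohen–Macaulay complex that is not shellable, in which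
every edge lies in at least two triangles, has at least three vertices in each color
class. -/
theorem stmt4 {V : Type} [DecidableEq V] [LinearOrder V] (k : Type) [Field k]
    (K : Finset (Finset V)) (hCM : IsCM2 k K) (hns : ¬Shellable 2 K)
    (hedge : ∀ e ∈ K, e.card = 2 →
      2 ≤ (K.filter fun T => T.card = 3 ∧ e ⊆ T).card)
    (κ : V → Fin 3) (hκ : ProperColoring 2 K κ) :
    ∀ c : Fin 3, 3 ≤ ((verts K).filter fun v => κ v = c).card := by
  intro c
  show 3 ≤ (colorClass K κ c).card
  obtain ⟨hK, hKne, hpure, -, -, hlink⟩ := hCM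
  by_contra! hsmall
  obtain ⟨v₁, v₂, hne, hA⟩ := card_eq_two.1 <| le_antisymm (Nat.lt_succ_iff.1 hsmall)
    (hκ.two_le_card_colorClass hK hpure hKne two_ne_zero hedge c)
  have hv₁ : {v₁} ∈ K :=
    hK.singleton_mem (mem_filter.1 (hA ▸ mem_insert_self v₁ {v₂})).1
  obtain ⟨l, hnd, hlE, hl⟩ :=
    exists_isConnectedOrder_of_conn (conn_of_hVanish_zero k (hK.link {v₁}) (hlink v₁ hv₁))
  have hcard : ∀ e ∈ l, e.card = 2 := fun e he =>
    (mem_filter.1 (hlE ▸ List.mem_toFinset.2 he :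
      e ∈ (link K {v₁}).filter fun F => F.card = 2)).2
  exact hns <| shellable_suspension hpure hnd hcard (isShellingOrder_one_of_nodup hnd hcard) hl hne
    (hlE ▸ hκ.facets_eq_suspension_link hK two_ne_zero hedge hA)
end
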